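/- arXiv:2001.08416 — 4 statements merged into one kernel-verified Lean document; each statement's English description precedes it below -/
import Mathlib

section
/- If in a necklace with k·a_i beads of color i (1 ≤ i ≤ s, each a_i ≥ 1, k ≥ 2) the beads of each color appear contiguously (i.e., for each color i the set of positions with color i is an interval of consecutive integers), then every k-splitting of the necklace has size at least (k−1)·s. -/
/-! Contiguity makes the color blocks disjoint intervals, and the cuts inside different
blocks are different cuts. Within the block of color `i` every thief owns at least one bead
(since `a i ≥ 1`), so the thief assignment takes all `k` values on that interval and must
change at least `k - 1` times there. Summing over the `s` colors gives `(k - 1) * s` cuts. -/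

open Finset

theorem card_image_Icc_le_card_filter_ne_succ_add_one {α : Type*} [DecidableEq α]
    (t : ℕ → α) (l u : ℕ) :
    #((Icc l u).image t) ≤ #((Ico l u).filter fun x => t x ≠ t (x + 1)) + 1 := by
  rcases lt_or_ge u l with hul | hlu
  · simp [Icc_eq_empty_of_lt hul]
  induction u, hlu using Nat.le_induction with
  | base => simp
  | succ u hlu ih =>
    have hIcc : Icc l (u + 1) = insert (u + 1) (Icc l u) := by
      ext x; simp only [mem_Icc, mem_insert]; omega
    have hIco : Ico l (u + 1) = insert u (Ico l u) := by
      ext x; simp only [mem_Ico, mem_insert]; omega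
    rw [hIcc, image_insert, hIco, filter_insert]
    by_cases hcut : t u ≠ t (u + 1)
    · have hnew : u ∉ (Ico l u).filter fun x => t x ≠ t (x + 1) := by simp
      rw [if_pos hcut, card_insert_of_notMem hnew]
      exact (card_insert_le _ _).trans (by omega)
    · have hmem : t (u + 1) ∈ (Icc l u).image t :=
        mem_image.mpr ⟨u, mem_Icc.mpr ⟨hlu, le_rfl⟩, not_not.mp hcut⟩
      rw [if_neg hcut, insert_eq_of_mem hmem]
      exact ih

theorem card_sub_one_le_card_filter_ne_succ_of_subset_image {α : Type*} [DecidableEq α]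
    {t : ℕ → α} {l u : ℕ} {T : Finset α} (hT : T ⊆ (Icc l u).image t) :
    #T - 1 ≤ #((Ico l u).filter fun x => t x ≠ t (x + 1)) := by
  have := (card_le_card hT).trans (card_image_Icc_le_card_filter_ne_succ_add_one t l u)
  omega

theorem Ico_subset_filter_of_filter_eq_Icc {N : ℕ} {p : ℕ → Prop} [DecidablePred p]
    {l u : ℕ} (h : (Icc 1 N).filter p = Icc l u) : Ico l u ⊆ (Ico 1 N).filter p := by
  intro x hx
  have hlx := mem_Ico.mp hx
  have hx' : x ∈ (Icc 1 N).filter p := h ▸ mem_Icc.mpr ⟨hlx.1, hlx.2.le⟩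
  have hu : u ∈ (Icc 1 N).filter p := h ▸ mem_Icc.mpr ⟨by omega, le_rfl⟩
  simp only [mem_filter, mem_Icc, mem_Ico] at hx' hu ⊢
  exact ⟨⟨hx'.1.1, by omega⟩, hx'.2⟩

theorem necklace_splitting_lower_bound_general (k s : ℕ)
    (a : ℕ → ℕ) (ha : ∀ i ∈ Finset.Icc 1 s, 1 ≤ a i)
    (n : ℕ)
    (c : ℕ → ℕ)
    (hcontig : ∀ i ∈ Finset.Icc 1 s, ∃ l u : ℕ,
      (Finset.Icc 1 (k * n)).filter (fun x => c x = i) = Finset.Icc l u)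
    (t : ℕ → ℕ)
    (hsplit : ∀ j ∈ Finset.Icc 1 k, ∀ i ∈ Finset.Icc 1 s,
      ((Finset.Icc 1 (k * n)).filter (fun x => c x = i ∧ t x = j)).card = a i) :
    (k - 1) * s ≤ ((Finset.Ico 1 (k * n)).filter (fun x => t x ≠ t (x + 1))).card := by
  set cuts := (Ico 1 (k * n)).filter fun x => t x ≠ t (x + 1)
  have hcolor : ∀ i ∈ Icc 1 s, k - 1 ≤ #(cuts.filter (c · = i)) := by
    intro i hi
    obtain ⟨l, u, hlu⟩ := hcontig i hi
    have hthieves : Icc 1 k ⊆ (Icc l u).image t := by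
      intro j hj
      obtain ⟨x, hx⟩ := card_pos.mp ((ha i hi).trans_eq (hsplit j hj i hi).symm)
      rw [mem_filter] at hx
      exact mem_image.mpr ⟨x, hlu ▸ mem_filter.mpr ⟨hx.1, hx.2.1⟩, hx.2.2⟩
    have hblock : (Ico l u).filter (fun x => t x ≠ t (x + 1)) ⊆ cuts.filter (c · = i) := by
      intro x hx
      rw [mem_filter] at hx
      have hx' := mem_filter.mp (Ico_subset_filter_of_filter_eq_Icc hlu hx.1)
      exact mem_filter.mpr ⟨mem_filter.mpr ⟨hx'.1, hx.2⟩, hx'.2⟩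
    calc k - 1 = #(Icc 1 k) - 1 := by simp
      _ ≤ _ := card_sub_one_le_card_filter_ne_succ_of_subset_image hthieves
      _ ≤ _ := card_le_card hblock
  calc (k - 1) * s = ∑ _i ∈ Icc 1 s, (k - 1) := by simp [mul_comm]
    _ ≤ ∑ i ∈ Icc 1 s, #(cuts.filter (c · = i)) := sum_le_sum hcolor
    _ = #(cuts.filter (c · ∈ Icc 1 s)) := sum_card_fiberwise_eq_card_filter _ _ _
    _ ≤ #cuts := card_filter_le _ _

/-- If in a necklace with `k * a i` beads of color `i` (`1 ≤ i ≤ s`) the beads of each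
color appear contiguously, then every `k`-splitting has at least `(k - 1) * s` cuts.
Beads are positions `1, …, k * n` where `n = a 1 + ⋯ + a s`; `c x` is the color of bead
`x`; a splitting is an assignment `t` of beads to the `k` thieves giving each thief
exactly `a i` beads of each color `i`; a cut is a position `x < k * n` with
`t x ≠ t (x + 1)`. -/
theorem necklace_splitting_lower_bound (k s : ℕ) (hk : 2 ≤ k) (hs : 1 ≤ s)
    (a : ℕ → ℕ) (ha : ∀ i ∈ Finset.Icc 1 s, 1 ≤ a i)
    (n : ℕ) (hn : n = ∑ i ∈ Finset.Icc 1 s, a i)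
    (c : ℕ → ℕ) (hc : ∀ x ∈ Finset.Icc 1 (k * n), c x ∈ Finset.Icc 1 s)
    (hcount : ∀ i ∈ Finset.Icc 1 s,
      ((Finset.Icc 1 (k * n)).filter (fun x => c x = i)).card = k * a i)
    (hcontig : ∀ i ∈ Finset.Icc 1 s, ∃ l u : ℕ,
      (Finset.Icc 1 (k * n)).filter (fun x => c x = i) = Finset.Icc l u)
    (t : ℕ → ℕ)
    (ht : ∀ x ∈ Finset.Icc 1 (k * n), t x ∈ Finset.Icc 1 k)
    (hsplit : ∀ j ∈ Finset.Icc 1 k, ∀ i ∈ Finset.Icc 1 s,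
      ((Finset.Icc 1 (k * n)).filter (fun x => c x = i ∧ t x = j)).card = a i) :
    (k - 1) * s ≤ ((Finset.Ico 1 (k * n)).filter (fun x => t x ≠ t (x + 1))).card :=
  necklace_splitting_lower_bound_general k s a ha n c hcontig t hsplit
end

section
/- Let G = (V, E) be a finite connected graph, let T ⊆ V be a set of terminals with a distinguished vertex d ∈ T and |T| ≥ 2, and let x be an integer with 1 ≤ x ≤ |E|. Let G′ be the graph obtained from G by attaching to each vertex t ∈ T \ {d} a new pendant path with exactly |E| edges (the internal vertices of these paths are new and the paths are pairwise disjoint). Then G contains a connected subgraph S with T ⊆ V(S) and |E(S)| ≤ x if and only if there exist connected subgraphs G_1 and G_2 of G′, each containing the vertex d, with |E(G_1)| = (|T|−1)·|E| + x, |E(G_2)| = |E|, and E(G′) = E(G_1) ∪ E(G_2). -/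
/-- The base relation for the graph `G'` obtained from `G` by attaching to each
terminal `t ∈ T \ {d}` a pendant path with `m` new vertices `(t, 0), …, (t, m - 1)`:
old edges of `G`, the edge from `t` to `(t, 0)`, and the path edges
`(t, i) — (t, i + 1)`. -/
def attachPathsRel {V : Type*} [DecidableEq V] (G : SimpleGraph V) (T : Finset V) (d : V)
    (m : ℕ) : (V ⊕ ({v // v ∈ T.erase d} × Fin m)) →
      (V ⊕ ({v // v ∈ T.erase d} × Fin m)) → Prop :=
  fun a b =>
    match a, b with
    | Sum.inl u, Sum.inl v => G.Adj u v
    | Sum.inl u, Sum.inr (t, j) => u = (t : V) ∧ (j : ℕ) = 0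
    | Sum.inr (t, i), Sum.inr (t', j) => t = t' ∧ (j : ℕ) = (i : ℕ) + 1
    | _, _ => False

/-- The graph `G'` obtained from `G` by attaching to each vertex of `T \ {d}` a new
pendant path with `m` edges. -/
def attachPaths {V : Type*} [DecidableEq V] (G : SimpleGraph V) (T : Finset V) (d : V)
    (m : ℕ) : SimpleGraph (V ⊕ ({v // v ∈ T.erase d} × Fin m)) :=
  SimpleGraph.fromRel (attachPathsRel G T d m)

/-!
Given `S`, enlarge it inside the connected graph `G` to a connected subgraph with exactly `x`
edges; together with all pendant paths it is `G₁`, and the copy of `G` is `G₂`.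

Conversely, a connected subgraph through `d` that meets the far end of a pendant path contains
the whole path, i.e. `|E|` edges, and in addition an edge of `G` at `d` (no path is attached
at `d`). So `G₂` misses every far end, `G₁` contains every pendant path, and the trace of `G₁`
on `G` is connected, contains `T`, and has at most `x` edges.
-/

open SimpleGraph Sum

namespace SimpleGraph

variable {V W : Type*} {G : SimpleGraph V}

theorem Subgraph.Connected.reflTransGen_adj {H : G.Subgraph} (hH : H.Connected) {u v : V}
    (hu : u ∈ H.verts) (hv : v ∈ H.verts) : Relation.ReflTransGen H.Adj u v :=
  ((reachable_iff_reflTransGen _ _).1 (hH.preconnected ⟨u, hu⟩ ⟨v, hv⟩)).lift Subtype.val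
    fun _ _ h ↦ h

theorem Subgraph.connected_of_reflTransGen_adj {H : G.Subgraph} {r : V} (hr : r ∈ H.verts)
    (h : ∀ v ∈ H.verts, Relation.ReflTransGen H.Adj r v) : H.Connected := by
  have reachable : ∀ {v}, Relation.ReflTransGen H.Adj r v →
      ∀ hv : v ∈ H.verts, H.coe.Reachable ⟨r, hr⟩ ⟨v, hv⟩ := by
    intro v hrv
    induction hrv with
    | refl => exact fun _ ↦ Reachable.refl _
    | tail _ hab ih => exact fun _ ↦ (ih hab.fst_mem).trans (Adj.reachable hab)
  rw [Subgraph.connected_iff', connected_iff_exists_forall_reachable]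
  exact ⟨⟨r, hr⟩, fun ⟨v, hv⟩ ↦ reachable (h v hv) hv⟩

theorem Subgraph.Connected.map_hom {G' : SimpleGraph W} (f : G →g G') {H : G.Subgraph}
    (hH : H.Connected) : (H.map f).Connected := by
  obtain ⟨r, hr⟩ := hH.nonempty
  refine Subgraph.connected_of_reflTransGen_adj (Set.mem_image_of_mem f hr) ?_
  rintro _ ⟨v, hv, rfl⟩
  exact (hH.reflTransGen_adj hr hv).lift f fun a b h ↦ ⟨a, b, h, rfl, rfl⟩

variable [Finite V]

theorem Subgraph.Connected.exists_le_connected_edgeSet_ncard_eq_add_one (hG : G.Connected)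
    {S : G.Subgraph} (hS : S.Connected) (hlt : S.edgeSet.ncard < G.edgeSet.ncard) :
    ∃ S' : G.Subgraph, S ≤ S' ∧ S'.Connected ∧ S'.edgeSet.ncard = S.edgeSet.ncard + 1 := by
  obtain ⟨u, v, huv, hu, hnotMem⟩ :
      ∃ u v, ∃ _ : G.Adj u v, u ∈ S.verts ∧ s(u, v) ∉ S.edgeSet := by
    by_contra! hclosed
    have hverts : ∀ v, v ∈ S.verts := by
      intro v
      by_contra hv
      obtain ⟨r, hr⟩ := hS.nonempty
      obtain ⟨e, -, he, hne⟩ := (hG.preconnected r v).some.exists_boundary_dart S.verts hr hv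
      exact hne (hclosed _ _ e.adj he).snd_mem
    have hsub : G.edgeSet ⊆ S.edgeSet := by
      intro e he
      induction e using Sym2.ind with
      | _ u v => exact hclosed u v he (hverts u)
    exact hlt.not_ge (Set.ncard_le_ncard hsub)
  refine ⟨S ⊔ G.subgraphOfAdj huv, le_sup_left,
    Subgraph.connected_sup hS.preconnected (subgraphOfAdj_connected huv).preconnected
      ⟨u, hu, by simp⟩, ?_⟩
  rw [Subgraph.edgeSet_sup, edgeSet_subgraphOfAdj, Set.union_singleton,
    Set.ncard_insert_of_notMem hnotMem]

theorem Subgraph.Connected.exists_le_connected_edgeSet_ncard_eq (hG : G.Connected)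
    {S : G.Subgraph} (hS : S.Connected) {n : ℕ} (hSn : S.edgeSet.ncard ≤ n)
    (hn : n ≤ G.edgeSet.ncard) :
    ∃ S' : G.Subgraph, S ≤ S' ∧ S'.Connected ∧ S'.edgeSet.ncard = n := by
  induction n, hSn using Nat.le_induction with
  | base => exact ⟨S, le_rfl, hS, rfl⟩
  | succ n _ ih =>
    obtain ⟨S', hSS', hS', hcard⟩ := ih (by omega)
    obtain ⟨S'', hS'S'', hS'', hcard'⟩ :=
      hS'.exists_le_connected_edgeSet_ncard_eq_add_one hG (by omega)
    exact ⟨S'', hSS'.trans hS'S'', hS'', by omega⟩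

end SimpleGraph

namespace attachPaths

variable {V : Type*} [DecidableEq V] {G : SimpleGraph V} {T : Finset V} {d : V} {m : ℕ}

theorem adj_inl_inl {u v : V} : (attachPaths G T d m).Adj (inl u) (inl v) ↔ G.Adj u v := by
  simp only [attachPaths, fromRel_adj, attachPathsRel, ne_eq, inl.injEq]
  exact ⟨fun h ↦ h.2.elim id Adj.symm, fun h ↦ ⟨h.ne, Or.inl h⟩⟩

theorem adj_inl_inr {u : V} {t : T.erase d} {j : Fin m} :
    (attachPaths G T d m).Adj (inl u) (inr (t, j)) ↔ u = t ∧ (j : ℕ) = 0 := by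
  simp [attachPaths, attachPathsRel]

theorem adj_inr_inr {t t' : T.erase d} {i j : Fin m} :
    (attachPaths G T d m).Adj (inr (t, i)) (inr (t', j)) ↔
      t = t' ∧ ((j : ℕ) = i + 1 ∨ (i : ℕ) = j + 1) := by
  simp only [attachPaths, fromRel_adj, attachPathsRel, ne_eq, inr.injEq, Prod.mk.injEq]
  grind

def pathPred (t : T.erase d) (j : Fin m) : V ⊕ (T.erase d × Fin m) :=
  if h : (j : ℕ) = 0 then inl t else inr (t, ⟨j - 1, by omega⟩)

def pendantEdge (t : T.erase d) (j : Fin m) : Sym2 (V ⊕ (T.erase d × Fin m)) :=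
  s(pathPred t j, inr (t, j))

theorem pathPred_mk_zero (t : T.erase d) (h : 0 < m) : pathPred t ⟨0, h⟩ = inl (t : V) := rfl

theorem pathPred_mk_succ (t : T.erase d) {j : ℕ} (h : j + 1 < m) :
    pathPred t ⟨j + 1, h⟩ = inr (t, ⟨j, by omega⟩) := rfl

theorem adj_inr_iff {a : V ⊕ (T.erase d × Fin m)} {t : T.erase d} {j : Fin m} :
    (attachPaths G T d m).Adj a (inr (t, j)) ↔
      a = pathPred t j ∨ ∃ h : (j : ℕ) + 1 < m, a = inr (t, ⟨j + 1, h⟩) := by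
  obtain ⟨j, hj⟩ := j
  rcases a with u | ⟨t', i, hi⟩
  · cases j <;> simp [adj_inl_inr, pathPred, eq_comm]
  · rw [adj_inr_inr]
    cases j <;> simp [pathPred, Fin.ext_iff] <;> grind

theorem adj_pathPred (t : T.erase d) (j : Fin m) :
    (attachPaths G T d m).Adj (pathPred t j) (inr (t, j)) :=
  adj_inr_iff.2 (Or.inl rfl)

def level (t : T.erase d) : V ⊕ (T.erase d × Fin m) → ℕ :=
  Sum.elim 0 fun p ↦ if p.1 = t then p.2 + 1 else 0

@[simp] theorem level_inl (t : T.erase d) (u : V) :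
    level t (inl u : V ⊕ (T.erase d × Fin m)) = 0 :=
  rfl

@[simp] theorem level_inr_self (t : T.erase d) (j : Fin m) : level t (inr (t, j)) = j + 1 := by
  simp [level]

theorem level_pathPred (t : T.erase d) (j : Fin m) : level t (pathPred t j) = j := by
  obtain ⟨_ | j, hj⟩ := j <;> simp [pathPred_mk_zero, pathPred_mk_succ]

theorem level_le_of_adj (t : T.erase d) {a b : V ⊕ (T.erase d × Fin m)}
    (h : (attachPaths G T d m).Adj a b) : level t b ≤ level t a + 1 := by
  rcases b with v | ⟨t', k⟩
  · simp
  by_cases ht : t' = t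
  · subst ht
    rcases adj_inr_iff.1 h with rfl | ⟨hk, rfl⟩ <;> simp [level_pathPred]
  · simp [level, ht]

theorem pendantEdge_eq_of_adj {t : T.erase d} {j : Fin m} {a b : V ⊕ (T.erase d × Fin m)}
    (h : (attachPaths G T d m).Adj a b) (ha : level t a = j) (hb : level t b = j + 1) :
    s(a, b) = pendantEdge t j := by
  rcases b with v | ⟨t', k⟩
  · simp at hb
  by_cases ht : t' = t
  · subst ht
    obtain rfl : k = j := Fin.ext (by simpa using hb)
    rcases adj_inr_iff.1 h with rfl | ⟨hk, rfl⟩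
    · rfl
    · simp at ha; omega
  · simp [level, ht] at hb

/-- Levels grow by at most one along an edge, and only the `j`-th path edge joins level `j` to
level `j + 1`. -/
theorem pendantEdge_mem_edgeSet_of_reachable {H : (attachPaths G T d m).Subgraph}
    {t : T.erase d} {j : Fin m} {a b : H.verts} (hab : H.coe.Reachable a b) (ha : level t a.1 ≤ j)
    (hb : j < level t b.1) : pendantEdge t j ∈ H.edgeSet := by
  obtain ⟨e, -, he, hne⟩ := hab.some.exists_boundary_dart {c | level t c.1 ≤ j} ha hb.not_ge
  have hadj : H.Adj e.fst e.snd := e.adj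
  have hle := level_le_of_adj t (H.adj_sub hadj)
  simp only [Set.mem_ofPred_eq, not_le] at he hne
  rw [← pendantEdge_eq_of_adj (H.adj_sub hadj) (by omega) (by omega)]
  exact hadj

theorem pendantEdge_mem_edgeSet {H : (attachPaths G T d m).Subgraph} (hH : H.Connected)
    (hd : inl d ∈ H.verts) {t : T.erase d} {i j : Fin m} (hi : inr (t, i) ∈ H.verts)
    (hji : j ≤ i) : pendantEdge t j ∈ H.edgeSet :=
  pendantEdge_mem_edgeSet_of_reachable (hH.preconnected ⟨_, hd⟩ ⟨_, hi⟩) (by simp)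
    (by simp; omega)

theorem inl_mem_verts_of_inr_mem {H : (attachPaths G T d m).Subgraph} (hH : H.Connected)
    (hd : inl d ∈ H.verts) {t : T.erase d} {i : Fin m} (hi : inr (t, i) ∈ H.verts) :
    inl (t : V) ∈ H.verts :=
  (pendantEdge_mem_edgeSet (j := ⟨0, i.pos⟩) hH hd hi (Nat.zero_le _)).fst_mem

def pendantEdges (T : Finset V) (d : V) (m : ℕ) :
    Set (Sym2 (V ⊕ (T.erase d × Fin m))) :=
  Set.range fun p : T.erase d × Fin m ↦ pendantEdge p.1 p.2

theorem edgeSet_eq :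
    (attachPaths G T d m).edgeSet = Sym2.map inl '' G.edgeSet ∪ pendantEdges T d m := by
  have inr_edge : ∀ {a : V ⊕ (T.erase d × Fin m)} {p : T.erase d × Fin m},
      (attachPaths G T d m).Adj a (inr p) → s(a, inr p) ∈ pendantEdges T d m := by
    rintro a ⟨t, j⟩ h
    rcases adj_inr_iff.1 h with rfl | ⟨hj, rfl⟩
    · exact ⟨(t, j), rfl⟩
    · exact ⟨(t, ⟨j + 1, hj⟩), Sym2.eq_swap⟩
  refine Set.Subset.antisymm (fun e h ↦ ?_) ?_
  · induction e using Sym2.ind with | _ a b => ?_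
    rcases a with u | p <;> rcases b with v | q
    · exact Or.inl ⟨s(u, v), adj_inl_inl.1 h, rfl⟩
    · exact Or.inr (inr_edge h)
    · exact Or.inr (Sym2.eq_swap ▸ inr_edge h.symm)
    · exact Or.inr (inr_edge h)
  · rintro _ (⟨e, he, rfl⟩ | ⟨⟨t, j⟩, rfl⟩)
    · induction e using Sym2.ind with | _ u v => exact adj_inl_inl.2 he
    · exact adj_pathPred t j

theorem disjoint_image_inl_pendantEdges (s : Set (Sym2 V)) :
    Disjoint (Sym2.map inl '' s) (pendantEdges T d m) := by
  rw [Set.disjoint_left]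
  rintro _ ⟨e, -, rfl⟩ ⟨⟨t, j⟩, h⟩
  have : inr (t, j) ∈ Sym2.map inl e := h ▸ Sym2.mem_mk_right _ _
  obtain ⟨u, -, hu⟩ := Sym2.mem_map.1 this
  exact inl_ne_inr hu

theorem pendantEdge_injective :
    Function.Injective fun p : T.erase d × Fin m ↦ pendantEdge p.1 p.2 := by
  rintro ⟨t, ⟨j, hj⟩⟩ ⟨t', ⟨j', hj'⟩⟩ h
  simp only [pendantEdge, Sym2.eq_iff, inr.injEq, Prod.mk.injEq] at h
  rcases h with ⟨-, rfl, h⟩ | ⟨h, h'⟩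
  · simp_all
  · cases j <;> cases j' <;> simp_all [pathPred_mk_zero, pathPred_mk_succ, Fin.ext_iff]
    omega

theorem ncard_pendantEdges (hd : d ∈ T) :
    (pendantEdges T d m).ncard = (T.card - 1) * m := by
  rw [pendantEdges, Set.ncard_range_of_injective pendantEdge_injective, Nat.card_prod,
    Nat.card_eq_fintype_card, Fintype.card_coe, Finset.card_erase_of_mem hd, Nat.card_fin]

def inlHom : G →g attachPaths G T d m := ⟨inl, adj_inl_inl.2⟩

@[simp] theorem coe_inlHom : ⇑(inlHom : G →g attachPaths G T d m) = inl := rfl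

def pendantSub (G : SimpleGraph V) (T : Finset V) (d : V) (m : ℕ) :
    (attachPaths G T d m).Subgraph :=
  ⨆ p : T.erase d × Fin m, (attachPaths G T d m).subgraphOfAdj (adj_pathPred p.1 p.2)

theorem edgeSet_pendantSub : (pendantSub G T d m).edgeSet = pendantEdges T d m := by
  simp [pendantSub, pendantEdges, Subgraph.edgeSet_iSup, edgeSet_subgraphOfAdj, pendantEdge]

theorem pendantSub_adj (t : T.erase d) (j : Fin m) :
    (pendantSub G T d m).Adj (pathPred t j) (inr (t, j)) :=
  Subgraph.iSup_adj.2 ⟨(t, j), subgraphOfAdj_adj_self _⟩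

theorem connected_map_inlHom_sup_pendantSub (hd : d ∈ T) {S : G.Subgraph} (hS : S.Connected)
    (hTS : (T : Set V) ⊆ S.verts) : (S.map inlHom ⊔ pendantSub G T d m).Connected := by
  set K := S.map inlHom ⊔ pendantSub G T d m
  have reach_inl : ∀ u ∈ S.verts, Relation.ReflTransGen K.Adj (inl d) (inl u) := fun u hu ↦
    (hS.reflTransGen_adj (hTS hd) hu).lift inl fun a b h ↦ Or.inl ⟨a, b, h, rfl, rfl⟩
  have reach_pathPred : ∀ (t : T.erase d) (j : Fin m),
      Relation.ReflTransGen K.Adj (inl d) (pathPred t j) := by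
    rintro t ⟨j, hj⟩
    induction j with
    | zero => exact reach_inl t (hTS (Finset.mem_of_mem_erase t.2))
    | succ j ih => exact (ih (by omega)).tail (Or.inr (pendantSub_adj t ⟨j, _⟩))
  refine Subgraph.connected_of_reflTransGen_adj (Or.inl ⟨d, hTS hd, rfl⟩) ?_
  rintro v (⟨u, hu, rfl⟩ | hv)
  · exact reach_inl u hu
  · simp only [pendantSub, Subgraph.verts_iSup, subgraphOfAdj_verts, Set.mem_iUnion,
      Set.mem_insert_iff, Set.mem_singleton_iff] at hv
    obtain ⟨⟨t, j⟩, rfl | rfl⟩ := hv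
    · exact reach_pathPred t j
    · exact (reach_pathPred t j).tail (Or.inr (pendantSub_adj t j))

theorem exists_cutting_of_steiner [Finite V] (hG : G.Connected) (hd : d ∈ T)
    (hm : G.edgeSet.ncard = m) {x : ℕ} (hx : x ≤ m) {S : G.Subgraph} (hS : S.Connected)
    (hTS : (T : Set V) ⊆ S.verts) (hSx : S.edgeSet.ncard ≤ x) :
    ∃ G₁ G₂ : (attachPaths G T d m).Subgraph,
      G₁.Connected ∧ G₂.Connected ∧
      inl d ∈ G₁.verts ∧ inl d ∈ G₂.verts ∧
      G₁.edgeSet.ncard = (T.card - 1) * m + x ∧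
      G₂.edgeSet.ncard = m ∧
      G₁.edgeSet ∪ G₂.edgeSet = (attachPaths G T d m).edgeSet := by
  obtain ⟨S', hSS', hS', hS'x⟩ := hS.exists_le_connected_edgeSet_ncard_eq hG hSx (hm ▸ hx)
  have hTS' : (T : Set V) ⊆ S'.verts := hTS.trans hSS'.1
  have hinj : Function.Injective (Sym2.map (inl : V → V ⊕ (T.erase d × Fin m))) :=
    Sym2.map.injective inl_injective
  have htop : (⊤ : G.Subgraph).Connected :=
    Subgraph.connected_iff'.2 (Subgraph.topIso.connected_iff.2 hG)
  refine ⟨S'.map inlHom ⊔ pendantSub G T d m, (⊤ : G.Subgraph).map inlHom,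
    connected_map_inlHom_sup_pendantSub hd hS' hTS', htop.map_hom _,
    Or.inl ⟨d, hTS' hd, rfl⟩, ⟨d, trivial, rfl⟩, ?_, ?_, ?_⟩
  · rw [Subgraph.edgeSet_sup, Subgraph.edgeSet_map, edgeSet_pendantSub, coe_inlHom,
      Set.ncard_union_eq (disjoint_image_inl_pendantEdges _), Set.ncard_image_of_injective _ hinj,
      ncard_pendantEdges hd, hS'x, add_comm]
  · rw [Subgraph.edgeSet_map, Subgraph.edgeSet_top, coe_inlHom,
      Set.ncard_image_of_injective _ hinj, hm]
  · rw [Subgraph.edgeSet_sup, Subgraph.edgeSet_map, Subgraph.edgeSet_map, edgeSet_pendantSub,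
      Subgraph.edgeSet_top, coe_inlHom, edgeSet_eq, Set.union_right_comm,
      Set.union_eq_right.2 (Set.image_mono S'.edgeSet_subset), Set.union_comm]

def proj : V ⊕ (T.erase d × Fin m) → V :=
  Sum.elim id fun p ↦ p.1

theorem proj_eq_of_adj_inr {a : V ⊕ (T.erase d × Fin m)} {p : T.erase d × Fin m}
    (h : (attachPaths G T d m).Adj a (inr p)) : proj a = p.1 := by
  obtain ⟨t, j⟩ := p
  rcases adj_inr_iff.1 h with rfl | ⟨_, rfl⟩
  · obtain ⟨_ | j, hj⟩ := j <;> rfl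
  · rfl

theorem connected_comap_inlHom {H : (attachPaths G T d m).Subgraph} (hH : H.Connected)
    (hd : inl d ∈ H.verts) : (H.comap inlHom).Connected := by
  refine Subgraph.connected_of_reflTransGen_adj (r := d) hd fun v hv ↦ ?_
  refine (hH.reflTransGen_adj hd hv).lift' proj fun a b h ↦ ?_
  rcases b with v | ⟨t, j⟩
  · rcases a with u | ⟨t, j⟩
    · exact .single ⟨adj_inl_inl.1 (H.adj_sub h), h⟩
    · obtain rfl : v = t := proj_eq_of_adj_inr (H.adj_sub h).symm
      exact .refl
  · have hproj : proj a = t := proj_eq_of_adj_inr (H.adj_sub h)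
    show Relation.ReflTransGen _ (proj a) t
    rw [hproj]

theorem add_two_le_ncard_edgeSet [Finite V] {H : (attachPaths G T d m).Subgraph}
    (hH : H.Connected) (hd : inl d ∈ H.verts) {t : T.erase d} {i : Fin m}
    (hi : inr (t, i) ∈ H.verts) : (i : ℕ) + 2 ≤ H.edgeSet.ncard := by
  have : Nontrivial H.verts := ⟨⟨_, hd⟩, ⟨_, hi⟩, by simp⟩
  obtain ⟨w, hw⟩ := hH.preconnected.exists_adj_of_nontrivial ⟨_, hd⟩
  obtain ⟨v, rfl⟩ : ∃ v, w = inl v := by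
    rcases w with v | ⟨t', j⟩
    · exact ⟨v, rfl⟩
    · exact absurd (adj_inl_inr.1 (H.adj_sub hw)).1 (Finset.ne_of_mem_erase t'.2).symm
  have hpath : pendantEdge t '' Set.Iic i ⊆ H.edgeSet := by
    rintro _ ⟨j, hj, rfl⟩
    exact pendantEdge_mem_edgeSet hH hd hi hj
  have hnotMem : s(inl d, inl v) ∉ pendantEdge t '' Set.Iic i := by
    rintro ⟨j, -, hj⟩
    exact Set.disjoint_left.1 (disjoint_image_inl_pendantEdges {s(d, v)}) ⟨_, rfl, rfl⟩
      ⟨(t, j), hj⟩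
  have hinj : Function.Injective (pendantEdge t : Fin m → _) := fun j j' h ↦
    congrArg Prod.snd (pendantEdge_injective (a₁ := (t, j)) (a₂ := (t, j')) h)
  calc (i : ℕ) + 2 = (insert s(inl d, inl v) (pendantEdge t '' Set.Iic i)).ncard := by
        rw [Set.ncard_insert_of_notMem hnotMem, Set.ncard_image_of_injective _ hinj,
          Set.ncard_eq_toFinset_card', Set.toFinset_Iic, Fin.card_Iic]
    _ ≤ H.edgeSet.ncard := Set.ncard_le_ncard (Set.insert_subset hw hpath)

theorem exists_steiner_of_cutting [Finite V] (hd : d ∈ T) (hm : 0 < m) {x : ℕ}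
    {G₁ G₂ : (attachPaths G T d m).Subgraph} (hG₁ : G₁.Connected) (hG₂ : G₂.Connected)
    (hd₁ : inl d ∈ G₁.verts) (hd₂ : inl d ∈ G₂.verts)
    (hcard₁ : G₁.edgeSet.ncard = (T.card - 1) * m + x) (hcard₂ : G₂.edgeSet.ncard = m)
    (hcover : G₁.edgeSet ∪ G₂.edgeSet = (attachPaths G T d m).edgeSet) :
    ∃ S : G.Subgraph, S.Connected ∧ (T : Set V) ⊆ S.verts ∧ S.edgeSet.ncard ≤ x := by
  have hlast : ∀ t : T.erase d, inr (t, ⟨m - 1, by omega⟩) ∈ G₁.verts := by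
    intro t
    have hmem : pendantEdge t ⟨m - 1, by omega⟩ ∈ G₁.edgeSet ∪ G₂.edgeSet := by
      rw [hcover, edgeSet_eq]
      exact Or.inr ⟨(t, _), rfl⟩
    refine hmem.elim (fun h ↦ h.snd_mem) fun h ↦ ?_
    have : m - 1 + 2 ≤ G₂.edgeSet.ncard := add_two_le_ncard_edgeSet hG₂ hd₂ h.snd_mem
    omega
  have hpend : pendantEdges T d m ⊆ G₁.edgeSet := by
    rintro _ ⟨⟨t, j⟩, rfl⟩
    exact pendantEdge_mem_edgeSet hG₁ hd₁ (hlast t) (Nat.le_sub_one_of_lt j.2)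
  have hinl : Sym2.map inl '' (G₁.comap inlHom).edgeSet ⊆ G₁.edgeSet := by
    rw [← coe_inlHom, ← Subgraph.edgeSet_map]
    exact Subgraph.edgeSet_mono ((Subgraph.map_le_iff_le_comap _ _ _).2 le_rfl)
  refine ⟨G₁.comap inlHom, connected_comap_inlHom hG₁ hd₁, fun v hv ↦ ?_, ?_⟩
  · by_cases hvd : v = d
    · exact hvd ▸ hd₁
    · exact inl_mem_verts_of_inr_mem hG₁ hd₁ (hlast ⟨v, Finset.mem_erase.2 ⟨hvd, hv⟩⟩)
  · have := Set.ncard_le_ncard (Set.union_subset hinl hpend)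
    rw [Set.ncard_union_eq (disjoint_image_inl_pendantEdges _),
      Set.ncard_image_of_injective _ (Sym2.map.injective inl_injective),
      ncard_pendantEdges hd] at this
    omega

end attachPaths

theorem steiner_iff_graph_cutting_general {V : Type} [Fintype V] [DecidableEq V]
    (G : SimpleGraph V) [DecidableRel G.Adj] (hG : G.Connected)
    (T : Finset V) (d : V) (hd : d ∈ T)
    (m : ℕ) (hm : m = G.edgeFinset.card)
    (x : ℕ) (hx1 : 1 ≤ x) (hx2 : x ≤ m) :
    (∃ S : G.Subgraph, S.Connected ∧ (T : Set V) ⊆ S.verts ∧ S.edgeSet.ncard ≤ x) ↔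
    (∃ G₁ G₂ : (attachPaths G T d m).Subgraph,
      G₁.Connected ∧ G₂.Connected ∧
      Sum.inl d ∈ G₁.verts ∧ Sum.inl d ∈ G₂.verts ∧
      G₁.edgeSet.ncard = (T.card - 1) * m + x ∧
      G₂.edgeSet.ncard = m ∧
      G₁.edgeSet ∪ G₂.edgeSet = (attachPaths G T d m).edgeSet) := by
  have hm' : G.edgeSet.ncard = m := by rw [hm, ← coe_edgeFinset, Set.ncard_coe_finset]
  constructor
  · rintro ⟨S, hS, hTS, hSx⟩
    exact attachPaths.exists_cutting_of_steiner hG hd hm' hx2 hS hTS hSx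
  · rintro ⟨G₁, G₂, hG₁, hG₂, hd₁, hd₂, hcard₁, hcard₂, hcover⟩
    exact attachPaths.exists_steiner_of_cutting hd (by omega) hG₁ hG₂ hd₁ hd₂ hcard₁
      hcard₂ hcover

/-- Reduction of the Steiner tree problem to planar graph cutting: `G` contains a
connected subgraph `S` with `T ⊆ V(S)` and at most `x` edges if and only if the graph
`G'` obtained by attaching to each terminal in `T \ {d}` a pendant path with `|E(G)|`
edges can be covered by two connected subgraphs `G₁, G₂` containing `d` with exactly
`(|T| - 1) * |E(G)| + x` and `|E(G)|` edges, respectively. -/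
theorem steiner_iff_graph_cutting {V : Type} [Fintype V] [DecidableEq V]
    (G : SimpleGraph V) [DecidableRel G.Adj] (hG : G.Connected)
    (T : Finset V) (d : V) (hd : d ∈ T) (hT : 2 ≤ T.card)
    (m : ℕ) (hm : m = G.edgeFinset.card)
    (x : ℕ) (hx1 : 1 ≤ x) (hx2 : x ≤ m) :
    (∃ S : G.Subgraph, S.Connected ∧ (T : Set V) ⊆ S.verts ∧ S.edgeSet.ncard ≤ x) ↔
    (∃ G₁ G₂ : (attachPaths G T d m).Subgraph,
      G₁.Connected ∧ G₂.Connected ∧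
      Sum.inl d ∈ G₁.verts ∧ Sum.inl d ∈ G₂.verts ∧
      G₁.edgeSet.ncard = (T.card - 1) * m + x ∧
      G₂.edgeSet.ncard = m ∧
      G₁.edgeSet ∪ G₂.edgeSet = (attachPaths G T d m).edgeSet) :=
  steiner_iff_graph_cutting_general G hG T d hd m hm x hx1 hx2
end

section
/- Let n ≥ 1 and consider the star with vertex set {d, x, u_1, …, u_n} and edges {d, x} and {x, u_i} for 1 ≤ i ≤ n, with positive integer edge lengths α_0 = α({d,x}) and α_i = α({x,u_i}), and let W = α_1 + ⋯ + α_n. Then there exists a closed walk starting and ending at d in the symmetric orientation of the star that traverses each of the arcs (x, u_i) and (u_i, x) exactly once for every i, traverses each of the arcs (d, x) and (x, d) exactly twice, and in which the total length traversed between any two consecutive visits of d is at most W + 2α_0, if and only if there exists a subset I ⊆ {1, …, n} with ∑_{i∈I} α_i = W/2. -/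
/-- Adjacency of the star with vertices `0 = d`, `1 = x` (the center) and
`i + 2 = u_i` for `0 ≤ i < n`: edges `{d, x}` and `{x, u_i}`. -/
def starAdj (n u v : ℕ) : Prop :=
  (u = 0 ∧ v = 1) ∨ (u = 1 ∧ v = 0) ∨
  (u = 1 ∧ 2 ≤ v ∧ v < n + 2) ∨ (2 ≤ u ∧ u < n + 2 ∧ v = 1)

/-- Length of an arc of the symmetric orientation of the star: arcs between `d = 0`
and `x = 1` have length `α₀`; arcs between `x = 1` and `u_i = i + 2` have length `α i`. -/
def starArcLen (α₀ : ℕ) (α : ℕ → ℕ) (u v : ℕ) : ℕ :=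
  if u = 0 ∨ v = 0 then α₀ else if u = 1 then α (v - 2) else α (u - 2)

/-- The number of times the walk `w` (with `ℓ` arcs, `w j` being the `j`-th vertex)
traverses the arc `(a, b)`. -/
def countArc (w : ℕ → ℕ) (ℓ a b : ℕ) : ℕ :=
  ((Finset.range ℓ).filter fun j => w j = a ∧ w (j + 1) = b).card

/-!
Give the depot `d` the weight `α₀`, the centre `x` the weight `0` and the leaf `u_i` the
weight `α_i`. Every arc of the star has `x` as an endpoint, so its length is the sum of the
weights of its ends, and a trip from `d` back to `d` has length `2 α₀ + 2 ∑ α_i` over the leaves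
it visits. A walk as in the statement leaves `d` exactly twice, so it consists of two trips
that together visit every leaf once; their lengths add up to `2 W + 4 α₀` and neither exceeds
`W + 2 α₀`, so the leaves of the first trip form the set `I`. Conversely, visiting the leaves
of `I` in one trip and the remaining leaves in a second one gives two trips of length exactly
`W + 2 α₀`, and every trip of that walk lies inside one of them.
-/

namespace StarRoute

open Finset

theorem sum_Ico_add_apply_succ {M : Type*} [AddCommMonoid M] (f : ℕ → M) {p q : ℕ}
    (hpq : p < q) :
    ∑ j ∈ Ico p q, (f j + f (j + 1)) = f p + f q + 2 • ∑ j ∈ Ioo p q, f j := by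
  have hleft : ∑ j ∈ Ico p q, f j = f p + ∑ j ∈ Ioo p q, f j := by
    rw [← Ioo_insert_left hpq, sum_insert left_notMem_Ioo]
  have hright : ∑ j ∈ Ico p q, f (j + 1) = f q + ∑ j ∈ Ioo p q, f j := by
    rw [sum_Ico_add', Ico_add_one_add_one_eq_Ioc, ← Ioo_insert_right hpq,
      sum_insert right_notMem_Ioo]
  rw [sum_add_distrib, hleft, hright, two_nsmul]
  abel

section Star

variable {n u v : ℕ}

theorem starAdj_symm (h : starAdj n u v) : starAdj n v u := by
  unfold starAdj at *
  omega

theorem starAdj_left_lt (h : starAdj n u v) : u < n + 2 := by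
  unfold starAdj at h
  omega

theorem eq_one_of_starAdj_zero (h : starAdj n 0 v) : v = 1 := by
  unfold starAdj at h
  omega

theorem eq_one_of_starAdj_of_two_le (h : starAdj n u v) (hv : 2 ≤ v) : u = 1 := by
  unfold starAdj at h
  omega

def starWeight (α₀ : ℕ) (α : ℕ → ℕ) (v : ℕ) : ℕ :=
  if v = 0 then α₀ else if v = 1 then 0 else α (v - 2)

/-- Every arc has the centre `x = 1` as an endpoint, and the centre has weight `0`. -/
theorem starArcLen_eq_starWeight_add (α₀ : ℕ) (α : ℕ → ℕ) (h : starAdj n u v) :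
    starArcLen α₀ α u v = starWeight α₀ α u + starWeight α₀ α v := by
  unfold starAdj at h
  rcases h with ⟨rfl, rfl⟩ | ⟨rfl, rfl⟩ | ⟨rfl, hv, -⟩ | ⟨hu, -, rfl⟩
  · simp [starArcLen, starWeight]
  · simp [starArcLen, starWeight]
  · simp [starArcLen, starWeight, show v ≠ 0 by omega, show v ≠ 1 by omega]
  · simp [starArcLen, starWeight, show u ≠ 0 by omega, show u ≠ 1 by omega]

end Star

section Walk

variable {n α₀ : ℕ} {α w : ℕ → ℕ} {p q : ℕ}

theorem sum_Ico_starArcLen_of_eq_zero (hadj : ∀ j ∈ Ico p q, starAdj n (w j) (w (j + 1)))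
    (hpq : p < q) (hp : w p = 0) (hq : w q = 0) :
    ∑ j ∈ Ico p q, starArcLen α₀ α (w j) (w (j + 1)) =
      2 * α₀ + 2 * ∑ j ∈ Ioo p q, starWeight α₀ α (w j) := by
  rw [sum_congr rfl fun j hj => starArcLen_eq_starWeight_add α₀ α (hadj j hj),
    sum_Ico_add_apply_succ (fun j => starWeight α₀ α (w j)) hpq, hp, hq, smul_eq_mul]
  simp only [starWeight, if_pos]
  ring

theorem sum_Ico_starArcLen_mono {p' q' : ℕ}
    (hadj : ∀ j ∈ Ico p' q', starAdj n (w j) (w (j + 1)))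
    (hp' : p' ≤ p) (hpq : p < q) (hq' : q ≤ q')
    (hwp' : w p' = 0) (hwp : w p = 0) (hwq : w q = 0) (hwq' : w q' = 0) :
    ∑ j ∈ Ico p q, starArcLen α₀ α (w j) (w (j + 1)) ≤
      ∑ j ∈ Ico p' q', starArcLen α₀ α (w j) (w (j + 1)) := by
  have hsub : Ico p q ⊆ Ico p' q' := Ico_subset_Ico hp' hq'
  rw [sum_Ico_starArcLen_of_eq_zero (fun j hj => hadj j (hsub hj)) hpq hwp hwq,
    sum_Ico_starArcLen_of_eq_zero hadj (hp'.trans_lt (hpq.trans_le hq')) hwp' hwq']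
  gcongr

def leafVisits (w : ℕ → ℕ) (p q : ℕ) : Finset ℕ :=
  (Ioo p q).filter fun j => 2 ≤ w j

theorem sum_Ico_starArcLen_eq_sum_leafVisits
    (hadj : ∀ j ∈ Ico p q, starAdj n (w j) (w (j + 1))) (hpq : p < q) (hp : w p = 0)
    (hq : w q = 0) (hint : ∀ j ∈ Ioo p q, w j ≠ 0) :
    ∑ j ∈ Ico p q, starArcLen α₀ α (w j) (w (j + 1)) =
      2 * α₀ + 2 * ∑ j ∈ leafVisits w p q, α (w j - 2) := by
  rw [sum_Ico_starArcLen_of_eq_zero hadj hpq hp hq, leafVisits, sum_filter]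
  congr 2
  refine sum_congr rfl fun j hj => ?_
  have := hint j hj
  unfold starWeight
  split_ifs <;> omega

theorem leafVisits_eq_union {m : ℕ} (hpm : p ≤ m) (hmq : m ≤ q) (hm : w m < 2) :
    leafVisits w p q = leafVisits w p m ∪ leafVisits w m q := by
  ext j
  simp only [leafVisits, mem_union, mem_filter, mem_Ioo]
  constructor
  · rintro ⟨⟨hpj, hjq⟩, hj⟩
    have : j ≠ m := by rintro rfl; omega
    omega
  · rintro (⟨⟨hpj, hjm⟩, hj⟩ | ⟨⟨hmj, hjq⟩, hj⟩) <;> exact ⟨⟨by omega, by omega⟩, hj⟩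

theorem disjoint_leafVisits (m : ℕ) : Disjoint (leafVisits w p m) (leafVisits w m q) :=
  disjoint_left.2 fun j h₁ h₂ => by
    simp only [leafVisits, mem_filter, mem_Ioo] at h₁ h₂
    omega

end Walk

section Route

variable {n ℓ : ℕ} {w : ℕ → ℕ}

theorem bijOn_leafVisits (hadj : ∀ j < ℓ, starAdj n (w j) (w (j + 1))) (hℓ : w ℓ = 0)
    (hleaf : ∀ i < n, countArc w ℓ 1 (i + 2) = 1) :
    Set.BijOn (fun j => w j - 2) (leafVisits w 0 ℓ) (range n) := by
  have hmem : ∀ {j}, j ∈ leafVisits w 0 ℓ ↔ 0 < j ∧ j < ℓ ∧ 2 ≤ w j := by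
    simp [leafVisits, and_assoc]
  have hlt : ∀ {j}, j ∈ leafVisits w 0 ℓ → w j - 2 < n := fun {j} hj => by
    have := starAdj_left_lt (hadj j (hmem.1 hj).2.1)
    have := (hmem.1 hj).2.2
    omega
  -- a leaf is entered from the centre, along an arc that is used only once
  have hprev : ∀ {j}, j ∈ leafVisits w 0 ℓ →
      j - 1 ∈ (range ℓ).filter fun k => w k = 1 ∧ w (k + 1) = w j - 2 + 2 := fun {j} hj => by
    obtain ⟨hj0, hjℓ, hj2⟩ := hmem.1 hj
    have hj1 : j - 1 + 1 = j := Nat.sub_add_cancel hj0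
    have := eq_one_of_starAdj_of_two_le (hadj (j - 1) (by omega)) (by rwa [hj1])
    simp only [mem_filter, mem_range, hj1, Nat.sub_add_cancel hj2]
    exact ⟨by omega, this, trivial⟩
  refine ⟨fun j hj => mem_range.2 (hlt hj), fun j hj j' hj' hjj' => ?_, fun i hi => ?_⟩
  · have hprev' := hprev hj'
    simp only at hjj'
    rw [← hjj'] at hprev'
    have := card_le_one.1 (hleaf (w j - 2) (hlt hj)).le _ (hprev hj) _ hprev'
    have := (hmem.1 hj).1
    have := (hmem.1 hj').1
    omega
  · obtain ⟨k, hk⟩ := card_pos.1 (by rw [← countArc, hleaf i (mem_range.1 hi)]; exact one_pos)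
    simp only [mem_filter, mem_range] at hk
    obtain ⟨hkℓ, hk1, hk2⟩ := hk
    have : k + 1 ≠ ℓ := by rintro rfl; omega
    exact ⟨k + 1, hmem.2 ⟨by omega, by omega, by omega⟩, by simp only [hk2]; omega⟩

theorem exists_middle_depot_visit (hadj : ∀ j < ℓ, starAdj n (w j) (w (j + 1)))
    (h0 : w 0 = 0) (h01 : countArc w ℓ 0 1 = 2) :
    ∃ m, 0 < m ∧ m < ℓ ∧ w m = 0 ∧ ∀ j < ℓ, w j = 0 → j = 0 ∨ j = m := by
  set Z := (range ℓ).filter fun j => w j = 0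
  have hZ : Z.card = 2 := by
    rw [← h01, countArc]
    congr 1
    exact filter_congr fun j hj =>
      ⟨fun h => ⟨h, eq_one_of_starAdj_zero (h ▸ hadj j (mem_range.1 hj))⟩, And.left⟩
  have h0Z : 0 ∈ Z := by
    obtain ⟨j, hj⟩ := card_pos.1 (by omega : 0 < Z.card)
    simp only [Z, mem_filter, mem_range] at hj ⊢
    exact ⟨by omega, h0⟩
  obtain ⟨m, hm⟩ := card_eq_one.1 (by rw [card_erase_of_mem h0Z, hZ] : (Z.erase 0).card = 1)
  have hmZ : m ∈ Z.erase 0 := hm ▸ mem_singleton_self m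
  simp only [Z, mem_erase, mem_filter, mem_range] at hmZ
  refine ⟨m, by omega, hmZ.2.1, hmZ.2.2, fun j hj hwj => ?_⟩
  by_cases hj0 : j = 0
  · exact Or.inl hj0
  · have : j ∈ Z.erase 0 := by simp [Z, hj0, hj, hwj]
    rw [hm, mem_singleton] at this
    exact Or.inr this

theorem exists_partition_of_route {α₀ W : ℕ} {α : ℕ → ℕ} (hW : W = ∑ i ∈ range n, α i)
    (h0 : w 0 = 0) (hℓ : w ℓ = 0) (hadj : ∀ j < ℓ, starAdj n (w j) (w (j + 1)))
    (hleaf : ∀ i < n, countArc w ℓ 1 (i + 2) = 1) (h01 : countArc w ℓ 0 1 = 2)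
    (htrip : ∀ p q : ℕ, p < q → q ≤ ℓ → w p = 0 → w q = 0 →
      (∀ r, p < r → r < q → w r ≠ 0) →
      ∑ j ∈ Ico p q, starArcLen α₀ α (w j) (w (j + 1)) ≤ W + 2 * α₀) :
    ∃ I ⊆ range n, 2 * ∑ i ∈ I, α i = W := by
  obtain ⟨m, hm0, hmℓ, hwm, hzero⟩ := exists_middle_depot_visit hadj h0 h01
  have hbij := bijOn_leafVisits hadj hℓ hleaf
  have hadj' : ∀ {p q}, q ≤ ℓ → ∀ j ∈ Ico p q, starAdj n (w j) (w (j + 1)) :=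
    fun hq j hj => hadj j ((mem_Ico.1 hj).2.trans_le hq)
  have hint : ∀ {p q}, q ≤ ℓ → m ∉ Ioo p q → 0 ∉ Ioo p q → ∀ r ∈ Ioo p q, w r ≠ 0 :=
    fun hq hm h0 r hr hwr => by
      rcases hzero r (by rw [mem_Ioo] at hr; omega) hwr with rfl | rfl <;> contradiction
  have hint₁ := hint (p := 0) hmℓ.le (by simp) (by simp)
  have hint₂ := hint (p := m) le_rfl (by simp) (by simp)
  have hlen₁ := htrip 0 m hm0 hmℓ.le h0 hwm fun r h₁ h₂ => hint₁ r (mem_Ioo.2 ⟨h₁, h₂⟩)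
  have hlen₂ := htrip m ℓ hmℓ le_rfl hwm hℓ fun r h₁ h₂ => hint₂ r (mem_Ioo.2 ⟨h₁, h₂⟩)
  rw [sum_Ico_starArcLen_eq_sum_leafVisits (hadj' hmℓ.le) hm0 h0 hwm hint₁] at hlen₁
  rw [sum_Ico_starArcLen_eq_sum_leafVisits (hadj' le_rfl) hmℓ hwm hℓ hint₂] at hlen₂
  have htotal :
      ∑ j ∈ leafVisits w 0 m, α (w j - 2) + ∑ j ∈ leafVisits w m ℓ, α (w j - 2) = W := by
    rw [← sum_union (disjoint_leafVisits m), ← leafVisits_eq_union hm0.le hmℓ.le (by omega), hW,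
      sum_nbij _ hbij.mapsTo hbij.injOn hbij.surjOn fun _ _ => rfl]
  have hsub : leafVisits w 0 m ⊆ leafVisits w 0 ℓ :=
    filter_subset_filter _ (Ioo_subset_Ioo_right hmℓ.le)
  refine ⟨(leafVisits w 0 m).image (fun j => w j - 2), fun i hi => ?_, ?_⟩
  · obtain ⟨j, hj, rfl⟩ := mem_image.1 hi
    exact hbij.mapsTo (hsub hj)
  · rw [sum_image fun j hj j' hj' => hbij.injOn (hsub hj) (hsub hj')]
    omega

end Route

section HubWalk

/-- At time `2 * U.length` the default value `0` of `getD` puts the walk back at `d`. -/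
def hubWalk (U : List ℕ) (j : ℕ) : ℕ :=
  if Even j then U.getD (j / 2) 0 else 1

theorem hubWalk_append_add (A B : List ℕ) (j : ℕ) :
    hubWalk (A ++ B) (2 * A.length + j) = hubWalk B j := by
  have hpar : Even (2 * A.length + j) ↔ Even j := by simp [Nat.even_add]
  unfold hubWalk
  rw [if_congr hpar rfl rfl, show (2 * A.length + j) / 2 = A.length + j / 2 by omega,
    List.getD_append_right _ _ _ _ (by omega), Nat.add_sub_cancel_left]

theorem hubWalk_append_of_le {A B : List ℕ} (hB : B.getD 0 0 = 0) {j : ℕ}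
    (hj : j ≤ 2 * A.length) : hubWalk (A ++ B) j = hubWalk A j := by
  unfold hubWalk
  split_ifs
  · rcases (by omega : j / 2 < A.length ∨ j / 2 = A.length) with h | h
    · exact List.getD_append _ _ _ _ h
    · rw [List.getD_append_right _ _ _ _ h.ge, List.getD_eq_default _ _ h.ge, h, Nat.sub_self, hB]
  · rfl

theorem hubWalk_two_mul_length (U : List ℕ) : hubWalk U (2 * U.length) = 0 := by
  simp [hubWalk]

theorem starAdj_hubWalk {n : ℕ} {U : List ℕ} (hU : ∀ v ∈ U, starAdj n v 1) :
    ∀ j < 2 * U.length, starAdj n (hubWalk U j) (hubWalk U (j + 1)) := by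
  intro j hj
  unfold hubWalk
  rcases Nat.even_or_odd j with he | ho
  · rw [if_pos he, if_neg (Nat.not_even_iff_odd.2 he.add_one),
      List.getD_eq_getElem _ _ (by omega)]
    exact hU _ (List.getElem_mem _)
  · rw [if_neg (Nat.not_even_iff_odd.2 ho), if_pos ho.add_one]
    by_cases h : (j + 1) / 2 < U.length
    · rw [List.getD_eq_getElem _ _ h]
      exact starAdj_symm (hU _ (List.getElem_mem _))
    · rw [List.getD_eq_default _ _ (not_lt.1 h)]
      exact Or.inr (Or.inl ⟨rfl, rfl⟩)

noncomputable def tripStops (s : Finset ℕ) : List ℕ :=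
  0 :: s.toList.map (· + 2)

theorem starAdj_of_mem_tripStops {n : ℕ} {s : Finset ℕ} (hs : s ⊆ range n) {v : ℕ}
    (hv : v ∈ tripStops s) : starAdj n v 1 := by
  simp only [tripStops, List.mem_cons, List.mem_map, mem_toList] at hv
  rcases hv with rfl | ⟨k, hk, rfl⟩
  · exact Or.inl ⟨rfl, rfl⟩
  · have := mem_range.1 (hs hk)
    exact Or.inr (Or.inr (Or.inr ⟨by omega, by omega, rfl⟩))

end HubWalk

section Sums

variable {M : Type*} [AddCommMonoid M] (g : ℕ → ℕ → M)

theorem sum_range_hubWalk_cons (x : ℕ) (T : List ℕ) :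
    ∑ j ∈ range (2 * (x :: T).length), g (hubWalk (x :: T) j) (hubWalk (x :: T) (j + 1)) =
      ((x :: T).map (g · 1)).sum + ((T ++ [0]).map (g 1)).sum := by
  induction T generalizing x with
  | nil => simp [sum_range_succ, hubWalk]
  | cons y T ih =>
    have hshift : ∀ j, hubWalk (x :: y :: T) (j + 2) = hubWalk (y :: T) j := fun j => by
      simpa [add_comm] using hubWalk_append_add [x] (y :: T) j
    rw [show 2 * (x :: y :: T).length = 2 * (y :: T).length + 1 + 1 by simp; ring,
      sum_range_succ', sum_range_succ']
    simp only [hshift, ih]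
    simp [hubWalk]
    abel

theorem sum_range_hubWalk (T : List ℕ) :
    ∑ j ∈ range (2 * (0 :: T).length), g (hubWalk (0 :: T) j) (hubWalk (0 :: T) (j + 1)) =
      ((0 :: T).map fun v => g v 1 + g 1 v).sum := by
  rw [sum_range_hubWalk_cons, List.sum_map_add, (List.perm_append_singleton 0 T).map _ |>.sum_eq]

theorem sum_range_hubWalk_append_left {A B : List ℕ} (hB : B.getD 0 0 = 0) :
    ∑ j ∈ range (2 * A.length), g (hubWalk (A ++ B) j) (hubWalk (A ++ B) (j + 1)) =
      ∑ j ∈ range (2 * A.length), g (hubWalk A j) (hubWalk A (j + 1)) :=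
  sum_congr rfl fun j hj => by
    rw [mem_range] at hj
    rw [hubWalk_append_of_le hB hj.le, hubWalk_append_of_le hB hj]

theorem sum_Ico_hubWalk_append_right (A B : List ℕ) :
    ∑ j ∈ Ico (2 * A.length) (2 * (A ++ B).length),
        g (hubWalk (A ++ B) j) (hubWalk (A ++ B) (j + 1)) =
      ∑ j ∈ range (2 * B.length), g (hubWalk B j) (hubWalk B (j + 1)) := by
  rw [sum_Ico_eq_sum_range, List.length_append, mul_add, Nat.add_sub_cancel_left]
  simp only [hubWalk_append_add, add_assoc]

theorem sum_range_hubWalk_tripStops (s : Finset ℕ) :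
    ∑ j ∈ range (2 * (tripStops s).length),
        g (hubWalk (tripStops s) j) (hubWalk (tripStops s) (j + 1)) =
      g 0 1 + g 1 0 + ∑ k ∈ s, (g (k + 2) 1 + g 1 (k + 2)) := by
  rw [tripStops, sum_range_hubWalk]
  simp [sum_map_toList]

theorem sum_range_hubWalk_tripStops_append (s t : Finset ℕ) :
    ∑ j ∈ range (2 * (tripStops s ++ tripStops t).length),
        g (hubWalk (tripStops s ++ tripStops t) j)
          (hubWalk (tripStops s ++ tripStops t) (j + 1)) =
      g 0 1 + g 1 0 + ∑ k ∈ s, (g (k + 2) 1 + g 1 (k + 2)) +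
        (g 0 1 + g 1 0 + ∑ k ∈ t, (g (k + 2) 1 + g 1 (k + 2))) := by
  rw [← sum_range_add_sum_Ico _ (by simp : 2 * (tripStops s).length ≤ _),
    sum_range_hubWalk_append_left g rfl, sum_Ico_hubWalk_append_right,
    sum_range_hubWalk_tripStops, sum_range_hubWalk_tripStops]

end Sums

section Tour

variable {s t : Finset ℕ}

theorem sum_range_starArcLen_hubWalk_tripStops (α₀ : ℕ) (α : ℕ → ℕ) (s : Finset ℕ) :
    ∑ j ∈ range (2 * (tripStops s).length),
        starArcLen α₀ α (hubWalk (tripStops s) j) (hubWalk (tripStops s) (j + 1)) =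
      2 * α₀ + 2 * ∑ k ∈ s, α k := by
  rw [sum_range_hubWalk_tripStops]
  simp [starArcLen, mul_sum, two_mul]

theorem countArc_hubWalk_tripStops_append_leaf (i : ℕ) :
    countArc (hubWalk (tripStops s ++ tripStops t)) (2 * (tripStops s ++ tripStops t).length)
        1 (i + 2) = (if i ∈ s then 1 else 0) + (if i ∈ t then 1 else 0) ∧
    countArc (hubWalk (tripStops s ++ tripStops t)) (2 * (tripStops s ++ tripStops t).length)
        (i + 2) 1 = (if i ∈ s then 1 else 0) + (if i ∈ t then 1 else 0) := by
  simp only [countArc, card_filter]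
  rw [sum_range_hubWalk_tripStops_append (fun u v => if u = 1 ∧ v = i + 2 then 1 else 0),
    sum_range_hubWalk_tripStops_append (fun u v => if u = i + 2 ∧ v = 1 then 1 else 0)]
  simp

theorem countArc_hubWalk_tripStops_append_depot :
    countArc (hubWalk (tripStops s ++ tripStops t)) (2 * (tripStops s ++ tripStops t).length)
        0 1 = 2 ∧
    countArc (hubWalk (tripStops s ++ tripStops t)) (2 * (tripStops s ++ tripStops t).length)
        1 0 = 2 := by
  simp only [countArc, card_filter]
  rw [sum_range_hubWalk_tripStops_append (fun u v => if u = 0 ∧ v = 1 then 1 else 0),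
    sum_range_hubWalk_tripStops_append (fun u v => if u = 1 ∧ v = 0 then 1 else 0)]
  simp

theorem starAdj_hubWalk_tripStops_append {n : ℕ} (hs : s ⊆ range n) (ht : t ⊆ range n) :
    ∀ j < 2 * (tripStops s ++ tripStops t).length,
      starAdj n (hubWalk (tripStops s ++ tripStops t) j)
        (hubWalk (tripStops s ++ tripStops t) (j + 1)) :=
  starAdj_hubWalk fun _ hv => (List.mem_append.1 hv).elim (starAdj_of_mem_tripStops hs)
    (starAdj_of_mem_tripStops ht)

/-- A trip cannot pass the visit of `d` between the two planned trips, so it lies inside one of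
them. -/
theorem sum_Ico_starArcLen_hubWalk_tripStops_append_le {n α₀ W : ℕ} {α : ℕ → ℕ}
    (hs : s ⊆ range n) (ht : t ⊆ range n)
    (hsW : 2 * ∑ k ∈ s, α k ≤ W) (htW : 2 * ∑ k ∈ t, α k ≤ W) {p q : ℕ} (hpq : p < q)
    (hq : q ≤ 2 * (tripStops s ++ tripStops t).length)
    (hp0 : hubWalk (tripStops s ++ tripStops t) p = 0)
    (hq0 : hubWalk (tripStops s ++ tripStops t) q = 0)
    (hint : ∀ r, p < r → r < q → hubWalk (tripStops s ++ tripStops t) r ≠ 0) :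
    ∑ j ∈ Ico p q, starArcLen α₀ α (hubWalk (tripStops s ++ tripStops t) j)
      (hubWalk (tripStops s ++ tripStops t) (j + 1)) ≤ W + 2 * α₀ := by
  set ℓ := 2 * (tripStops s ++ tripStops t).length
  set m := 2 * (tripStops s).length
  have hadj : ∀ {p' q'}, q' ≤ ℓ → ∀ j ∈ Ico p' q',
      starAdj n (hubWalk (tripStops s ++ tripStops t) j)
        (hubWalk (tripStops s ++ tripStops t) (j + 1)) := fun hq' j hj =>
    starAdj_hubWalk_tripStops_append hs ht j ((mem_Ico.1 hj).2.trans_le hq')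
  have hm : hubWalk (tripStops s ++ tripStops t) m = 0 := by
    rw [← add_zero m, hubWalk_append_add]
    rfl
  have hmℓ : m ≤ ℓ := by simp [ℓ, m]
  rcases le_or_gt q m with hqm | hmq
  · calc _ ≤ ∑ j ∈ Ico 0 m, starArcLen α₀ α (hubWalk (tripStops s ++ tripStops t) j)
            (hubWalk (tripStops s ++ tripStops t) (j + 1)) :=
          sum_Ico_starArcLen_mono (hadj hmℓ) (Nat.zero_le p) hpq hqm rfl hp0 hq0 hm
      _ = 2 * α₀ + 2 * ∑ k ∈ s, α k := by
          rw [← range_eq_Ico, sum_range_hubWalk_append_left _ rfl,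
            sum_range_starArcLen_hubWalk_tripStops]
      _ ≤ W + 2 * α₀ := by omega
  · have hmp : m ≤ p := not_lt.1 fun hpm => hint m hpm hmq hm
    calc _ ≤ ∑ j ∈ Ico m ℓ, starArcLen α₀ α (hubWalk (tripStops s ++ tripStops t) j)
            (hubWalk (tripStops s ++ tripStops t) (j + 1)) :=
          sum_Ico_starArcLen_mono (hadj le_rfl) hmp hpq hq hm hp0 hq0
            (hubWalk_two_mul_length _)
      _ = 2 * α₀ + 2 * ∑ k ∈ t, α k := by
          rw [sum_Ico_hubWalk_append_right, sum_range_starArcLen_hubWalk_tripStops]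
      _ ≤ W + 2 * α₀ := by omega

end Tour

end StarRoute

open StarRoute in
theorem star_route_iff_partition_general (n : ℕ) (α₀ : ℕ) (α : ℕ → ℕ)
    (W : ℕ) (hW : W = ∑ i ∈ Finset.range n, α i) :
    (∃ (ℓ : ℕ) (w : ℕ → ℕ),
      w 0 = 0 ∧ w ℓ = 0 ∧
      (∀ j < ℓ, starAdj n (w j) (w (j + 1))) ∧
      (∀ i < n, countArc w ℓ 1 (i + 2) = 1 ∧ countArc w ℓ (i + 2) 1 = 1) ∧
      countArc w ℓ 0 1 = 2 ∧ countArc w ℓ 1 0 = 2 ∧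
      (∀ p q : ℕ, p < q → q ≤ ℓ → w p = 0 → w q = 0 →
        (∀ r, p < r → r < q → w r ≠ 0) →
        ∑ j ∈ Finset.Ico p q, starArcLen α₀ α (w j) (w (j + 1)) ≤ W + 2 * α₀)) ↔
    (∃ I ⊆ Finset.range n, 2 * ∑ i ∈ I, α i = W) := by
  constructor
  · rintro ⟨ℓ, w, h0, hℓ, hadj, hleaf, h01, -, htrip⟩
    exact exists_partition_of_route hW h0 hℓ hadj (fun i hi => (hleaf i hi).1) h01 htrip
  · rintro ⟨I, hI, hIW⟩
    have hJ : Finset.range n \ I ⊆ Finset.range n := Finset.sdiff_subset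
    have hJW : 2 * ∑ i ∈ Finset.range n \ I, α i = W := by
      have := Finset.sum_sdiff hI (f := α)
      omega
    have hleaf := countArc_hubWalk_tripStops_append_leaf (s := I) (t := Finset.range n \ I)
    refine ⟨_, hubWalk (tripStops I ++ tripStops (Finset.range n \ I)), rfl,
      hubWalk_two_mul_length _, starAdj_hubWalk_tripStops_append hI hJ,
      fun i hi => by by_cases hiI : i ∈ I <;> simpa [hiI, hi] using hleaf i,
      countArc_hubWalk_tripStops_append_depot.1, countArc_hubWalk_tripStops_append_depot.2,
      fun p q hpq hq hp0 hq0 hint => sum_Ico_starArcLen_hubWalk_tripStops_append_le hI hJ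
        hIW.le hJW.le hpq hq hp0 hq0 hint⟩

/-- On the star with leaves `u_1, …, u_n` of lengths `α_1, …, α_n` rooted at the
pendant depot `d`, a closed walk from `d` traversing each arc `(x, u_i)` and `(u_i, x)`
exactly once, each arc `(d, x)` and `(x, d)` exactly twice, and whose length between any
two consecutive visits of `d` is at most `W + 2 * α₀`, exists if and only if some subset
of the leaf lengths sums to `W / 2` (where `W = α_1 + ⋯ + α_n`). -/
theorem star_route_iff_partition (n : ℕ) (hn : 1 ≤ n) (α₀ : ℕ) (hα₀ : 0 < α₀)
    (α : ℕ → ℕ) (hα : ∀ i < n, 0 < α i)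
    (W : ℕ) (hW : W = ∑ i ∈ Finset.range n, α i) :
    (∃ (ℓ : ℕ) (w : ℕ → ℕ),
      w 0 = 0 ∧ w ℓ = 0 ∧
      (∀ j < ℓ, starAdj n (w j) (w (j + 1))) ∧
      (∀ i < n, countArc w ℓ 1 (i + 2) = 1 ∧ countArc w ℓ (i + 2) 1 = 1) ∧
      countArc w ℓ 0 1 = 2 ∧ countArc w ℓ 1 0 = 2 ∧
      (∀ p q : ℕ, p < q → q ≤ ℓ → w p = 0 → w q = 0 →
        (∀ r, p < r → r < q → w r ≠ 0) →
        ∑ j ∈ Finset.Ico p q, starArcLen α₀ α (w j) (w (j + 1)) ≤ W + 2 * α₀)) ↔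
    (∃ I ⊆ Finset.range n, 2 * ∑ i ∈ I, α i = W) :=
  star_route_iff_partition_general n α₀ α W hW
end

section
/- If S is a set of n positive integers with distinct subset sums, then max S ≥ 2^n / (10·√n). -/
/-!
Put `g X = 2 ∑_{x ∈ X} x - ∑_{x ∈ S} x` for `X ⊆ S`. Averaging over `X`, the cross terms of
`g X ^ 2` cancel, so `∑_X g X ^ 2 = 2 ^ n ∑_{x ∈ S} x ^ 2 ≤ 2 ^ n n m ^ 2` with `m = max S`.
By Markov's inequality at least `3/4` of the `2 ^ n` subsets have `|g X| < 2 m √n`; since the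
subset sums are distinct these are distinct integers, so `(3/4) 2 ^ n ≤ 4 m √n + 1`.
-/

open Finset

def DistinctSubsetSums (S : Finset ℕ) : Prop :=
  ∀ X ⊆ S, ∀ Y ⊆ S, ∑ x ∈ X, x = ∑ y ∈ Y, y → X = Y

theorem Finset.sum_powerset_sq_two_mul_sum_sub_sum {α R : Type*} [DecidableEq α] [CommRing R]
    (s : Finset α) (f : α → R) :
    ∑ t ∈ s.powerset, (2 * ∑ i ∈ t, f i - ∑ i ∈ s, f i) ^ 2 = 2 ^ #s * ∑ i ∈ s, f i ^ 2 := by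
  induction s using Finset.induction_on with
  | empty => simp
  | insert a s ha ih =>
    rw [sum_powerset_insert ha, ← sum_add_distrib, sum_insert ha, card_insert_of_notMem ha]
    calc ∑ t ∈ s.powerset, ((2 * ∑ i ∈ t, f i - (f a + ∑ i ∈ s, f i)) ^ 2
          + (2 * ∑ i ∈ insert a t, f i - (f a + ∑ i ∈ s, f i)) ^ 2)
        = ∑ t ∈ s.powerset, (2 * (2 * ∑ i ∈ t, f i - ∑ i ∈ s, f i) ^ 2 + 2 * f a ^ 2) :=
          sum_congr rfl fun t ht => by
            rw [sum_insert fun hat => ha (mem_powerset.mp ht hat)]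
            ring
      _ = 2 ^ (#s + 1) * ∑ i ∈ insert a s, f i ^ 2 := by
          rw [sum_add_distrib, ← mul_sum, ih, sum_const, card_powerset, nsmul_eq_mul,
            sum_insert ha]
          push_cast
          ring

theorem Finset.card_filter_le_mul_le_sum {ι : Type*} (s : Finset ι) (g : ι → ℝ)
    (hg : ∀ i ∈ s, 0 ≤ g i) (c : ℝ) :
    #{i ∈ s | c ≤ g i} * c ≤ ∑ i ∈ s, g i :=
  calc #{i ∈ s | c ≤ g i} * c = ∑ i ∈ s with c ≤ g i, c := by rw [sum_const, nsmul_eq_mul]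
    _ ≤ ∑ i ∈ s with c ≤ g i, g i := sum_le_sum fun i hi => (mem_filter.mp hi).2
    _ ≤ ∑ i ∈ s, g i := sum_le_sum_of_subset_of_nonneg (filter_subset _ _) fun i hi _ => hg i hi

theorem Int.card_le_two_mul_add_one_of_abs_le {s : Finset ℤ} {r : ℝ} (hr : 0 ≤ r)
    (hs : ∀ z ∈ s, |(z : ℝ)| ≤ r) : (#s : ℝ) ≤ 2 * r + 1 := by
  have hsub : s ⊆ Icc (-⌊r⌋) ⌊r⌋ := fun z hz => by
    obtain ⟨hlo, hhi⟩ := abs_le.mp (hs z hz)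
    exact mem_Icc.mpr ⟨by rw [neg_le]; exact Int.le_floor.mpr (by push_cast; linarith),
      Int.le_floor.mpr hhi⟩
  have hcard : (#s : ℤ) ≤ 2 * ⌊r⌋ + 1 := by
    have := card_le_card hsub
    rw [Int.card_Icc] at this
    have := Int.floor_nonneg.mpr hr
    omega
  have hfloor : (⌊r⌋ : ℝ) ≤ r := Int.floor_le r
  have : (#s : ℝ) ≤ 2 * ⌊r⌋ + 1 := by exact_mod_cast hcard
  linarith

theorem DistinctSubsetSums.injOn_two_mul_sum_sub_sum {S : Finset ℕ} (h : DistinctSubsetSums S) :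
    Set.InjOn (fun X : Finset ℕ => 2 * ∑ x ∈ X, (x : ℤ) - ∑ x ∈ S, (x : ℤ)) S.powerset := by
  intro X hX Y hY hXY
  refine h X (mem_powerset.mp hX) Y (mem_powerset.mp hY) ?_
  have : ∑ x ∈ X, (x : ℤ) = ∑ y ∈ Y, (y : ℤ) := by simp only at hXY; linarith
  exact Nat.cast_injective (R := ℤ) (by push_cast; exact this)

theorem Finset.three_mul_card_le_of_injOn_of_sum_sq_le {ι : Type*} {s : Finset ι} {g : ι → ℤ}
    (hg : Set.InjOn g s) {r : ℝ} (hr : 0 < r)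
    (hsum : ∑ i ∈ s, (g i : ℝ) ^ 2 ≤ #s * r ^ 2 / 4) : 3 * (#s : ℝ) ≤ 4 * (2 * r + 1) := by
  have hfar : (#{i ∈ s | r ^ 2 ≤ (g i : ℝ) ^ 2} : ℝ) * 4 ≤ #s := by
    have := (card_filter_le_mul_le_sum s _ (fun i _ => sq_nonneg (g i : ℝ)) (r ^ 2)).trans hsum
    nlinarith [pow_pos hr 2]
  have hnear : (#{i ∈ s | ¬ r ^ 2 ≤ (g i : ℝ) ^ 2} : ℝ) ≤ 2 * r + 1 := by
    rw [← card_image_of_injOn (hg.mono (filter_subset _ _))]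
    refine Int.card_le_two_mul_add_one_of_abs_le hr.le fun z hz => ?_
    obtain ⟨i, hi, rfl⟩ := mem_image.mp hz
    exact (abs_lt_of_sq_lt_sq (not_le.mp (mem_filter.mp hi).2) hr.le).le
  have hsplit : (#s : ℝ) = #{i ∈ s | r ^ 2 ≤ (g i : ℝ) ^ 2}
      + #{i ∈ s | ¬ r ^ 2 ≤ (g i : ℝ) ^ 2} := by
    exact_mod_cast (card_filter_add_card_filter_not _).symm
  linarith

/-- Erdős–Moser lower bound: if `S` is a set of `n` positive integers with distinct
subset sums, then `max S ≥ 2 ^ n / (10 * √n)`. -/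
theorem erdos_moser_lower_bound (n : ℕ) (hn : 0 < n) (S : Finset ℕ)
    (hcard : S.card = n) (hpos : ∀ x ∈ S, 0 < x)
    (hdss : DistinctSubsetSums S) (hne : S.Nonempty) :
    (2 : ℝ) ^ n / (10 * Real.sqrt n) ≤ (S.max' hne : ℝ) := by
  set m : ℕ := S.max' hne
  set r : ℝ := 2 * m * Real.sqrt n
  have hm : (1 : ℝ) ≤ m := by exact_mod_cast hpos m (S.max'_mem hne)
  have hsqrt : (1 : ℝ) ≤ Real.sqrt n := Real.one_le_sqrt.mpr (by exact_mod_cast hn)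
  have hsum_sq : ∑ x ∈ S, (x : ℝ) ^ 2 ≤ r ^ 2 / 4 :=
    calc ∑ x ∈ S, (x : ℝ) ^ 2 ≤ #S • (m : ℝ) ^ 2 := sum_le_card_nsmul _ _ _ fun x hx => by
          gcongr; exact_mod_cast S.le_max' x hx
      _ = r ^ 2 / 4 := by
        rw [nsmul_eq_mul, hcard, mul_pow, mul_pow, Real.sq_sqrt (Nat.cast_nonneg n)]; ring
  have hcount := three_mul_card_le_of_injOn_of_sum_sq_le hdss.injOn_two_mul_sum_sub_sum
    (r := r) (by positivity) (by
      push_cast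
      rw [sum_powerset_sq_two_mul_sum_sub_sum, card_powerset, hcard, mul_div_assoc]
      push_cast
      gcongr)
  rw [card_powerset, hcard] at hcount
  push_cast at hcount
  have hmn : 1 ≤ (m : ℝ) * Real.sqrt n := one_le_mul_of_one_le_of_one_le hm hsqrt
  rw [div_le_iff₀ (by positivity)]
  linarith
end
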